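/- Let c ≥ 1 be an integer, k an odd positive integer, ζ a primitive 2c-th root of unity, and let d, z ≥ 0 be integers and a ∈ ℤ[ζ]. If n ≥ (2d+1)·kc, then Φ_{kc}(q)^{d+1} divides ∑_{m=0}^{n} ζ^m a q^{zm} binom(n,m)_q in ℤ[ζ][q]. -/

import Mathlib

/-!
Write `S(n, g) = ∑ₘ uᵐ [n choose m]_q g(m)` with `u = ζ`, so that `uᴺ = -1` for `N = kc`, and
consider the moments `T_j(n, w) = S(n, m ↦ q^{wm} [m]_{q^N}^j)`, where `T_0(n, z)` is the sum in
question up to the factor `a`. By the `q`-Pascal rule, divisibility of every `T_j(n, ·)` by a power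
`Φ^{e_j}` with `e_j` decreasing in `j` passes from `n` to `n + 1`. By `q`-Vandermonde,
`T_j(n + N, w)` is a combination of the `[N choose l]_q`, divisible by `Φ = Φ_N` for `0 < l < N`,
and two end terms; as `uᴺ = -1` and `q^N ≡ 1 mod Φ`, these cancel up to `(q^N - 1) T_{j+1}(n, w)` and
moments of lower order. So `Φ^{⌊(L + 1 - j)/2⌋}` divides `T_j(n, w)` once `n ≥ LN`, and
`L = 2d + 1`, `j = 0` is the theorem.
-/

open Polynomial Finset

/-- The Gaussian (q-)binomial coefficient as a polynomial, satisfying the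
product formula `∏_{i=n-m+1}^{n}(1-q^i) / ∏_{i=1}^{m}(1-q^i)`. -/
noncomputable def qbinom (R : Type*) [CommRing R] : ℕ → ℕ → Polynomial R
  | _, 0 => 1
  | 0, _+1 => 0
  | n+1, m+1 => qbinom R n (m+1) + X ^ (n - m) * qbinom R n m

/-- The subring ℤ[ζ] of ℂ. -/
noncomputable abbrev Zadj (ζ : ℂ) : Type := Algebra.adjoin ℤ ({ζ} : Set ℂ)

/-- ζ as an element of ℤ[ζ]. -/
noncomputable def zeta (ζ : ℂ) : Zadj ζ := ⟨ζ, Algebra.self_mem_adjoin_singleton ℤ ζ⟩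

section QBinom

variable {R : Type*} [CommRing R]

@[simp]
lemma qbinom_zero_right (n : ℕ) : qbinom R n 0 = 1 := by
  cases n <;> rfl

lemma qbinom_succ_succ (n m : ℕ) :
    qbinom R (n + 1) (m + 1) = qbinom R n (m + 1) + X ^ (n - m) * qbinom R n m := rfl

lemma qbinom_eq_zero_of_lt {n m : ℕ} (h : n < m) : qbinom R n m = 0 := by
  induction n generalizing m with
  | zero => obtain ⟨m, rfl⟩ := Nat.exists_eq_succ_of_ne_zero h.ne'; rfl
  | succ n ih =>
    obtain ⟨m, rfl⟩ := Nat.exists_eq_succ_of_ne_zero (Nat.ne_zero_of_lt h)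
    rw [qbinom_succ_succ, ih (by omega), ih (by omega), mul_zero, add_zero]

@[simp]
lemma qbinom_self (n : ℕ) : qbinom R n n = 1 := by
  induction n with
  | zero => rfl
  | succ n ih => rw [qbinom_succ_succ, qbinom_eq_zero_of_lt n.lt_succ_self, ih]; simp

lemma qbinom_succ_succ' (n m : ℕ) :
    qbinom R (n + 1) (m + 1) = X ^ (m + 1) * qbinom R n (m + 1) + qbinom R n m := by
  induction n generalizing m with
  | zero => cases m <;> simp [qbinom_succ_succ, qbinom_eq_zero_of_lt]
  | succ n ih =>
    cases m with
    | zero =>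
      conv_lhs => rw [qbinom_succ_succ, ih]
      rw [qbinom_succ_succ n 0]
      simp only [qbinom_zero_right, Nat.sub_zero]
      ring
    | succ m =>
      conv_lhs => rw [qbinom_succ_succ, ih, ih]
      rw [qbinom_succ_succ n (m + 1), qbinom_succ_succ n m, Nat.add_sub_add_right]
      rcases le_or_gt (m + 1) n with h | h
      · have hX : (X : R[X]) ^ (n - m) * X ^ (m + 1) =
            X ^ (m + 1 + 1) * X ^ (n - (m + 1)) := by
          rw [← pow_add, ← pow_add]; congr 1; omega
        linear_combination qbinom R n (m + 1) * hX
      · rw [qbinom_eq_zero_of_lt h]; ring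

lemma one_sub_X_pow_mul_qbinom_succ (n m : ℕ) :
    (1 - X ^ (m + 1)) * qbinom R (n + 1) (m + 1) = (1 - X ^ (n + 1)) * qbinom R n m := by
  rcases le_or_gt m n with h | h
  · have hX : (X : R[X]) ^ (m + 1) * X ^ (n - m) = X ^ (n + 1) := by
      rw [← pow_add]; congr 1; omega
    linear_combination qbinom_succ_succ' (R := R) n m -
      X ^ (m + 1) * qbinom_succ_succ (R := R) n m - qbinom R n m * hX
  · rw [qbinom_eq_zero_of_lt h, qbinom_eq_zero_of_lt (by omega : n + 1 < m + 1)]; ring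

lemma map_qbinom {S : Type*} [CommRing S] (f : R →+* S) (n m : ℕ) :
    (qbinom R n m).map f = qbinom S n m := by
  induction n generalizing m with
  | zero => cases m <;> simp [qbinom]
  | succ n ih =>
    cases m with
    | zero => simp
    | succ m => simp [qbinom_succ_succ, ih]

lemma cyclotomic_int_not_dvd_X_pow_sub_one {N j : ℕ} (hj : 0 < j) (hjN : j < N) :
    ¬ cyclotomic N ℤ ∣ X ^ j - 1 := by
  intro h
  have hω := Complex.isPrimitiveRoot_exp N (by omega)
  have hdvd := eval_dvd (x := Complex.exp (2 * Real.pi * Complex.I / N))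
    (map_dvd (mapRingHom (Int.castRingHom ℂ)) h)
  simp only [coe_mapRingHom, map_cyclotomic, Polynomial.map_sub, Polynomial.map_pow, map_X,
    Polynomial.map_one, eval_sub, eval_pow, eval_X, eval_one,
    (hω.isRoot_cyclotomic (by omega)).eq_zero, zero_dvd_iff, sub_eq_zero] at hdvd
  exact hω.pow_ne_one_of_pos_of_lt hj.ne' hjN hdvd

lemma cyclotomic_dvd_qbinom {N m : ℕ} (hm : 0 < m) (hmN : m < N) :
    cyclotomic N R ∣ qbinom R N m := by
  suffices h : cyclotomic N ℤ ∣ qbinom ℤ N m by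
    simpa [map_cyclotomic, map_qbinom] using map_dvd (mapRingHom (Int.castRingHom R)) h
  obtain ⟨m, rfl⟩ := Nat.exists_eq_succ_of_ne_zero hm.ne'
  obtain ⟨N, rfl⟩ := Nat.exists_eq_succ_of_ne_zero (by omega : N ≠ 0)
  have hprime : Prime (cyclotomic (N + 1) ℤ) :=
    (cyclotomic.irreducible N.succ_pos).prime
  have hdvd : cyclotomic (N + 1) ℤ ∣ (1 - X ^ (m + 1)) * qbinom ℤ (N + 1) (m + 1) := by
    rw [one_sub_X_pow_mul_qbinom_succ]
    exact (dvd_sub_comm.mp (cyclotomic.dvd_X_pow_sub_one _ ℤ)).mul_right _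
  refine (hprime.dvd_or_dvd hdvd).resolve_left fun h => ?_
  exact cyclotomic_int_not_dvd_X_pow_sub_one hm hmN (dvd_sub_comm.mp h)

end QBinom

section QBinomSum

variable {R : Type*} [CommRing R] (u : R)

noncomputable def qbinomSum (n : ℕ) (g : ℕ → R[X]) : R[X] :=
  ∑ m ∈ range (n + 1), C (u ^ m) * qbinom R n m * g m

variable {u}

@[simp]
lemma qbinomSum_zero (g : ℕ → R[X]) : qbinomSum u 0 g = g 0 := by
  simp [qbinomSum]

lemma qbinomSum_congr {n : ℕ} {g g' : ℕ → R[X]} (h : ∀ m ≤ n, g m = g' m) :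
    qbinomSum u n g = qbinomSum u n g' :=
  sum_congr rfl fun m hm => by rw [h m (Nat.lt_succ_iff.mp (mem_range.mp hm))]

lemma qbinomSum_mul_left (n : ℕ) (p : R[X]) (g : ℕ → R[X]) :
    qbinomSum u n (fun m => p * g m) = p * qbinomSum u n g := by
  simp only [qbinomSum, mul_sum]
  exact sum_congr rfl fun _ _ => by ring

lemma qbinomSum_sum {ι : Type*} (n : ℕ) (s : Finset ι) (g : ι → ℕ → R[X]) :
    qbinomSum u n (fun m => ∑ i ∈ s, g i m) = ∑ i ∈ s, qbinomSum u n (g i) := by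
  simp only [qbinomSum, mul_sum]
  exact sum_comm

lemma qbinomSum_eq_sum_range_add_two (n : ℕ) (g : ℕ → R[X]) :
    qbinomSum u n g = ∑ m ∈ range (n + 2), C (u ^ m) * qbinom R n m * g m := by
  rw [sum_range_succ, qbinom_eq_zero_of_lt n.lt_succ_self, mul_zero, zero_mul, add_zero,
    qbinomSum]

lemma qbinomSum_succ (n : ℕ) (g : ℕ → R[X]) :
    qbinomSum u (n + 1) g =
      qbinomSum u n (fun m => X ^ m * g m) + C u * qbinomSum u n (fun m => g (m + 1)) := by
  rw [qbinomSum, sum_range_succ' _ (n + 1), qbinomSum_eq_sum_range_add_two,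
    sum_range_succ' _ (n + 1), qbinomSum, mul_sum, add_right_comm, ← sum_add_distrib]
  simp only [qbinom_succ_succ', qbinom_zero_right, pow_succ, map_mul]
  congr 1
  · exact sum_congr rfl fun _ _ => by ring
  · simp

lemma qbinomSum_add (n N : ℕ) (g : ℕ → R[X]) :
    qbinomSum u (n + N) g =
      qbinomSum u N (fun l => qbinomSum u n (fun m => X ^ ((N - l) * m) * g (l + m))) := by
  induction N generalizing g with
  | zero => simp
  | succ N ih =>
    rw [← add_assoc, qbinomSum_succ (n + N), ih, ih, qbinomSum_succ N]
    congr 1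
    · refine qbinomSum_congr fun l hl => ?_
      rw [← qbinomSum_mul_left, Nat.sub_add_comm hl]
      congr 1
      funext m
      ring
    · simp only [Nat.add_sub_add_right, add_right_comm]

end QBinomSum

section Moments

variable {R : Type*} [CommRing R]

variable (R) in
/-- The `q`-integer `[m]_{q^N}`. -/
noncomputable def qnat (N m : ℕ) : R[X] :=
  ∑ i ∈ range m, (X ^ N) ^ i

lemma qnat_add (N M m : ℕ) : qnat R N (M + m) = qnat R N M + (X ^ N) ^ M * qnat R N m := by
  simp only [qnat, sum_range_add, pow_add, mul_sum]

lemma X_pow_pow_eq_one_add_mul_qnat (N m : ℕ) :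
    ((X : R[X]) ^ N) ^ m = 1 + (X ^ N - 1) * qnat R N m := by
  rw [qnat, mul_geom_sum]; ring

variable (u : R)

noncomputable def qbinomMoment (N j n w : ℕ) : R[X] :=
  qbinomSum u n fun m => X ^ (w * m) * qnat R N m ^ j

lemma qbinomSum_qnat_add_pow (N M j n w : ℕ) :
    qbinomSum u n (fun m => X ^ (w * m) * qnat R N (M + m) ^ j) =
      ∑ i ∈ range (j + 1),
        (j.choose i : R[X]) * qnat R N M ^ (j - i) * X ^ (N * M * i) * qbinomMoment u N i n w := by
  simp only [qbinomMoment, ← qbinomSum_mul_left, ← qbinomSum_sum]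
  congr 1
  funext m
  rw [qnat_add, add_comm, add_pow, mul_sum]
  refine sum_congr rfl fun i _ => ?_
  rw [mul_pow, ← pow_mul, ← pow_mul]
  ring

lemma qbinomMoment_succ (N j n w : ℕ) :
    qbinomMoment u N j (n + 1) w = qbinomMoment u N j n (w + 1) +
      C u * X ^ w *
        ∑ i ∈ range (j + 1), (j.choose i : R[X]) * X ^ (N * i) * qbinomMoment u N i n w := by
  rw [qbinomMoment, qbinomSum_succ]
  congr 1
  · exact congrArg _ (funext fun m => by ring)
  · have hshift : (fun m => X ^ (w * (m + 1)) * qnat R N (m + 1) ^ j) =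
        fun m => X ^ w * (X ^ (w * m) * qnat R N (1 + m) ^ j) := funext fun m => by
      rw [add_comm 1 m]; ring
    rw [hshift, qbinomSum_mul_left, qbinomSum_qnat_add_pow]
    simp [qnat, mul_assoc]

lemma qbinomMoment_add_weight (N j n w : ℕ) :
    qbinomMoment u N j n (w + N) =
      qbinomMoment u N j n w + (X ^ N - 1) * qbinomMoment u N (j + 1) n w := by
  simp only [qbinomMoment, qbinomSum, mul_sum, ← sum_add_distrib]
  refine sum_congr rfl fun m _ => ?_
  rw [add_mul, pow_add, pow_mul (X : R[X]) N m, X_pow_pow_eq_one_add_mul_qnat]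
  ring

lemma qbinomMoment_add (N j n w : ℕ) :
    qbinomMoment u N j (n + N) w = qbinomSum u N fun l =>
      X ^ (w * l) * qbinomSum u n fun m => X ^ ((N - l + w) * m) * qnat R N (l + m) ^ j := by
  rw [qbinomMoment, qbinomSum_add]
  congr 1
  funext l
  rw [← qbinomSum_mul_left]
  congr 1
  funext m
  ring

end Moments

lemma pow_dvd_mul_of_le_succ {M : Type*} [CommMonoid M] {p a b : M} {e k : ℕ}
    (ha : p ∣ a) (hb : p ^ k ∣ b) (hek : e ≤ k + 1) : p ^ e ∣ a * b :=
  (pow_dvd_pow p hek).trans (pow_succ' p k ▸ mul_dvd_mul ha hb)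

section Divisibility

variable {R : Type*} [CommRing R] {Φ : R[X]} {u : R} {N : ℕ}

lemma pow_succ_dvd_qbinomSum_sub (hN : 0 < N)
    (hΦq : ∀ l, 0 < l → l < N → Φ ∣ qbinom R N l) {e : ℕ} {g : ℕ → R[X]}
    (hg : ∀ l, 0 < l → l < N → Φ ^ e ∣ g l) :
    Φ ^ (e + 1) ∣ qbinomSum u N g - (g 0 + C (u ^ N) * g N) := by
  obtain ⟨N, rfl⟩ := Nat.exists_eq_succ_of_ne_zero hN.ne'
  rw [qbinomSum, sum_range_succ, sum_range_succ']
  simp only [qbinom_self, qbinom_zero_right, pow_zero, map_one, mul_one, one_mul]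
  rw [add_sub_add_comm, add_sub_cancel_right, sub_self, add_zero]
  refine dvd_sum fun l hl => ?_
  have hl : l + 1 < N + 1 := by have := mem_range.mp hl; omega
  rw [mul_assoc]
  exact (pow_dvd_mul_of_le_succ (hΦq _ l.succ_pos hl) (hg _ l.succ_pos hl) le_rfl).mul_left _

variable (Φ u N) in
def MomentsDvd (L n : ℕ) : Prop :=
  ∀ j w, Φ ^ ((L + 1 - j) / 2) ∣ qbinomMoment u N j n w

lemma MomentsDvd.succ {L n : ℕ} (h : MomentsDvd Φ u N L n) : MomentsDvd Φ u N L (n + 1) := by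
  intro j w
  rw [qbinomMoment_succ]
  refine dvd_add (h j (w + 1)) (dvd_mul_of_dvd_right (dvd_sum fun i hi => ?_) _)
  have hij : i ≤ j := Nat.lt_succ_iff.mp (mem_range.mp hi)
  exact dvd_mul_of_dvd_right ((pow_dvd_pow Φ (by omega)).trans (h i w)) _

lemma MomentsDvd.pow_dvd_qbinomMoment_add_weight_sub (hΦ : Φ ∣ X ^ N - 1) {L n : ℕ}
    (h : MomentsDvd Φ u N L n) (j w : ℕ) :
    Φ ^ ((L + 2 - j) / 2) ∣ qbinomMoment u N j n (w + N) -
      X ^ (w * N) * qbinomSum u n (fun m => X ^ (w * m) * qnat R N (N + m) ^ j) := by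
  have hΦpow : Φ ∣ X ^ (N * (w + N * j)) - 1 :=
    hΦ.trans (pow_one_sub_dvd_pow_mul_sub_one _ _ _)
  rw [qbinomMoment_add_weight, qbinomSum_qnat_add_pow, sum_range_succ, Nat.choose_self,
    Nat.sub_self, pow_zero, Nat.cast_one, mul_one, one_mul]
  have hsplit : qbinomMoment u N j n w + (X ^ N - 1) * qbinomMoment u N (j + 1) n w -
      X ^ (w * N) * (∑ i ∈ range j, (j.choose i : R[X]) * qnat R N N ^ (j - i) *
        X ^ (N * N * i) * qbinomMoment u N i n w + X ^ (N * N * j) * qbinomMoment u N j n w) =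
      (X ^ N - 1) * qbinomMoment u N (j + 1) n w -
        (X ^ (N * (w + N * j)) - 1) * qbinomMoment u N j n w -
        ∑ i ∈ range j, X ^ (w * N) * ((j.choose i : R[X]) * qnat R N N ^ (j - i) *
          X ^ (N * N * i) * qbinomMoment u N i n w) := by
    rw [mul_add, mul_sum]; ring
  rw [hsplit]
  refine dvd_sub (dvd_sub ?_ ?_)
    (dvd_sum fun i hi => dvd_mul_of_dvd_right (dvd_mul_of_dvd_right ?_ _) _)
  · exact pow_dvd_mul_of_le_succ hΦ (h (j + 1) w) (by omega)
  · exact pow_dvd_mul_of_le_succ hΦpow (h j w) (by omega)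
  · have := mem_range.mp hi
    exact (pow_dvd_pow Φ (by omega)).trans (h i w)

lemma MomentsDvd.dvd_qbinomSum_qnat_add_pow {L n : ℕ} (h : MomentsDvd Φ u N L n) (M j w : ℕ) :
    Φ ^ ((L + 1 - j) / 2) ∣ qbinomSum u n (fun m => X ^ (w * m) * qnat R N (M + m) ^ j) := by
  rw [qbinomSum_qnat_add_pow]
  refine dvd_sum fun i hi => dvd_mul_of_dvd_right ?_ _
  have := mem_range.mp hi
  exact (pow_dvd_pow Φ (by omega)).trans (h i w)

lemma MomentsDvd.add (hN : 0 < N) (hu : u ^ N = -1) (hΦ : Φ ∣ X ^ N - 1)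
    (hΦq : ∀ l, 0 < l → l < N → Φ ∣ qbinom R N l) {L n : ℕ} (h : MomentsDvd Φ u N L n) :
    MomentsDvd Φ u N (L + 1) (n + N) := by
  intro j w
  rw [qbinomMoment_add]
  set g : ℕ → R[X] := fun l =>
    X ^ (w * l) * qbinomSum u n fun m => X ^ ((N - l + w) * m) * qnat R N (l + m) ^ j
  have hmid : Φ ^ ((L + 1 - j) / 2 + 1) ∣ qbinomSum u N g - (g 0 + C (u ^ N) * g N) :=
    pow_succ_dvd_qbinomSum_sub hN hΦq fun l _ _ =>
      dvd_mul_of_dvd_right (h.dvd_qbinomSum_qnat_add_pow l j _) _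
  have hends : g 0 + C (u ^ N) * g N = qbinomMoment u N j n (w + N) -
      X ^ (w * N) * qbinomSum u n (fun m => X ^ (w * m) * qnat R N (N + m) ^ j) := by
    simp [g, hu, qbinomMoment, add_comm N w]
    ring
  have := dvd_add ((pow_dvd_pow Φ (by omega)).trans hmid)
    (hends ▸ h.pow_dvd_qbinomMoment_add_weight_sub hΦ j w)
  rwa [sub_add_cancel] at this

lemma momentsDvd_of_mul_le (hN : 0 < N) (hu : u ^ N = -1) (hΦ : Φ ∣ X ^ N - 1)
    (hΦq : ∀ l, 0 < l → l < N → Φ ∣ qbinom R N l) {L n : ℕ} (hn : L * N ≤ n) :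
    MomentsDvd Φ u N L n := by
  induction L generalizing n with
  | zero => intro j w; simp [show (0 + 1 - j) / 2 = 0 by omega]
  | succ L ih =>
    rw [add_mul, one_mul] at hn
    induction n, hn using Nat.le_induction with
    | base => exact (ih le_rfl).add hN hu hΦ hΦq
    | succ n _ hn => exact hn.succ

end Divisibility

lemma IsPrimitiveRoot.pow_half_eq_neg_one {K : Type*} [CommRing K] [NoZeroDivisors K]
    {ζ : K} {c : ℕ} (hζ : IsPrimitiveRoot ζ (2 * c)) (hc : 0 < c) : ζ ^ c = -1 := by
  have h := hζ.pow_of_dvd hc.ne' (dvd_mul_left c 2)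
  rw [Nat.mul_div_cancel _ hc] at h
  exact h.eq_neg_one_of_two_right

theorem higher_order_vanishing_const_general (c k : ℕ) (hc : 1 ≤ c) (hk : Odd k)
    (ζ : ℂ) (hζ : IsPrimitiveRoot ζ (2 * c)) (d z : ℕ) (a : Zadj ζ) (n : ℕ)
    (hn : (2 * d + 1) * (k * c) ≤ n) :
    Polynomial.cyclotomic (k * c) (Zadj ζ) ^ (d + 1) ∣
      ∑ m ∈ Finset.range (n + 1), C (zeta ζ ^ m * a) * X ^ (z * m) *
        qbinom (Zadj ζ) n m := by
  have hu : zeta ζ ^ (k * c) = -1 := Subtype.ext <| by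
    simp [zeta, mul_comm k c, pow_mul, hζ.pow_half_eq_neg_one hc, hk.neg_one_pow]
  have hsum : ∑ m ∈ range (n + 1), C (zeta ζ ^ m * a) * X ^ (z * m) * qbinom (Zadj ζ) n m =
      C a * qbinomMoment (zeta ζ) (k * c) 0 n z := by
    simp only [qbinomMoment, qbinomSum, pow_zero, mul_one, mul_sum, map_mul]
    exact sum_congr rfl fun _ _ => by ring
  have h := momentsDvd_of_mul_le (Nat.mul_pos hk.pos hc) hu (cyclotomic.dvd_X_pow_sub_one _ _)
    (fun _ => cyclotomic_dvd_qbinom) hn 0 z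
  rw [show (2 * d + 1 + 1 - 0) / 2 = d + 1 by omega] at h
  exact hsum ▸ h.mul_left _

theorem higher_order_vanishing_const (c k : ℕ) (hc : 1 ≤ c) (hk : Odd k) (hk0 : 0 < k)
    (ζ : ℂ) (hζ : IsPrimitiveRoot ζ (2 * c)) (d z : ℕ) (a : Zadj ζ) (n : ℕ)
    (hn : (2 * d + 1) * (k * c) ≤ n) :
    Polynomial.cyclotomic (k * c) (Zadj ζ) ^ (d + 1) ∣
      ∑ m ∈ Finset.range (n + 1), C (zeta ζ ^ m * a) * X ^ (z * m) *
        qbinom (Zadj ζ) n m :=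
  higher_order_vanishing_const_general c k hc hk ζ hζ d z a n hn
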